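/- Let X and Y be real normed spaces with X of dimension at least 2, and let T : X → Y be a nonzero linear mapping. The following conditions are equivalent: (i) for all x,y ∈ X, x ⊥_{ρ*} y implies Tx ⊥_{ρ*} Ty; (ii) for all x,y ∈ X, x ⊥_{ρ*} y implies Tx ⊥_B Ty; (iii) ‖Tx‖ = ‖T‖·‖x‖ for all x ∈ X; (iv) ρ*(Tx, Ty) = ‖T‖⁴·ρ*(x,y) for all x,y ∈ X. (Here ‖T‖ denotes the operator norm of T, which is finite under any of these conditions.) -/

import Mathlib

/-! For fixed `x, y` the map `t ↦ ‖x + t • y‖²` is convex, so its difference quotients are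
monotone; this gives the existence of `ρ₊`, `ρ₋ = -ρ₊(·, -·) ≤ ρ₊`, and the characterisation of
Birkhoff orthogonality `x ⊥_B y ↔ ρ₋(x,y) ≤ 0 ≤ ρ₊(x,y)`. Hence (i) ⇒ (ii), while (iii) ⇒ (iv) ⇒ (i)
because norm derivatives scale quadratically under a similarity.

For (ii) ⇒ (iii), fix `u ≠ 0` and `v`. The vector `w = v - (ρ₊(u,v) / ‖u‖²) • u` satisfies
`ρ₊(u,w) = 0`, so `u ⊥_{ρ*} w`, so `T u ⊥_B T w`, which unwinds to
`ρ₊(u,v) ‖T u‖² ≤ ρ₊(T u, T v) ‖u‖²`. This says exactly that `t ↦ ‖T(a + t v)‖² / ‖a + t v‖²` has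
nonnegative right derivative along any segment avoiding `0`; running along the segment in both
directions shows that `‖T a‖ / ‖a‖` is the same for any two non-collinear `a, b`, and trivially
so for collinear ones. -/

open Filter Topology

/-- The norm derivative `ρ₊(x,y) = lim_{t→0⁺} (‖x+ty‖² − ‖x‖²)/(2t)`. -/
noncomputable def rhoPlus {X : Type*} [NormedAddCommGroup X] [NormedSpace ℝ X] (x y : X) : ℝ :=
  limUnder (𝓝[>] (0 : ℝ)) (fun t : ℝ => (‖x + t • y‖ ^ 2 - ‖x‖ ^ 2) / (2 * t))

/-- The norm derivative `ρ₋(x,y) = lim_{t→0⁻} (‖x+ty‖² − ‖x‖²)/(2t)`. -/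
noncomputable def rhoMinus {X : Type*} [NormedAddCommGroup X] [NormedSpace ℝ X] (x y : X) : ℝ :=
  limUnder (𝓝[<] (0 : ℝ)) (fun t : ℝ => (‖x + t • y‖ ^ 2 - ‖x‖ ^ 2) / (2 * t))

/-- `ρ*(x,y) := ρ₋(x,y)·ρ₊(x,y)`. -/
noncomputable def rhoStar {X : Type*} [NormedAddCommGroup X] [NormedSpace ℝ X] (x y : X) : ℝ :=
  rhoMinus x y * rhoPlus x y
/-- The operator norm of a linear map: the supremum of `‖T x‖` over the unit sphere. -/
noncomputable def opNorm {X Y : Type*} [NormedAddCommGroup X] [NormedSpace ℝ X]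
    [NormedAddCommGroup Y] [NormedSpace ℝ Y] (T : X →ₗ[ℝ] Y) : ℝ :=
  sSup {c : ℝ | ∃ x : X, ‖x‖ = 1 ∧ c = ‖T x‖}

open Set

section NormDerivatives

variable {E : Type*} [NormedAddCommGroup E] [NormedSpace ℝ E]

noncomputable def normSqSlope (x y : E) (t : ℝ) : ℝ := (‖x + t • y‖ ^ 2 - ‖x‖ ^ 2) / (2 * t)

lemma two_mul_mul_normSqSlope (x y : E) {t : ℝ} (ht : t ≠ 0) :
    2 * t * normSqSlope x y t = ‖x + t • y‖ ^ 2 - ‖x‖ ^ 2 := by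
  rw [normSqSlope]
  field_simp

lemma normSqSlope_neg (x y : E) (t : ℝ) : normSqSlope x (-y) t = -normSqSlope x y (-t) := by
  simp only [normSqSlope, smul_neg, neg_smul, mul_neg, div_neg, neg_neg]

lemma convexOn_norm_add_smul_sq (x y : E) : ConvexOn ℝ univ fun t : ℝ => ‖x + t • y‖ ^ 2 := by
  have hnorm : ConvexOn ℝ univ fun t : ℝ => ‖x + t • y‖ := by
    simpa [Function.comp_def, AffineMap.lineMap_apply, add_comm] using
      (convexOn_norm convex_univ).comp_affineMap (AffineMap.lineMap x (x + y) : ℝ →ᵃ[ℝ] E)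
  exact hnorm.pow (fun _ _ => norm_nonneg _) 2

lemma monotoneOn_normSqSlope (x y : E) : MonotoneOn (normSqSlope x y) {0}ᶜ := by
  intro s hs t ht hst
  have h := (convexOn_norm_add_smul_sq x y).secant_mono (mem_univ 0) (mem_univ s) (mem_univ t)
    hs ht hst
  simp only [zero_smul, add_zero, sub_zero] at h
  simp only [normSqSlope, mul_comm (2 : ℝ), ← div_div]
  gcongr

lemma tendsto_normSqSlope_rhoPlus (x y : E) :
    Tendsto (normSqSlope x y) (𝓝[>] 0) (𝓝 (rhoPlus x y)) := by
  have hbdd : BddBelow (normSqSlope x y '' Ioi 0) :=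
    ⟨normSqSlope x y (-1), forall_mem_image.2 fun t ht =>
      monotoneOn_normSqSlope x y (by norm_num) (ne_of_gt ht) (by linarith [mem_Ioi.1 ht])⟩
  have h := ((monotoneOn_normSqSlope x y).mono fun t (ht : 0 < t) => ht.ne').tendsto_nhdsGT hbdd
  rwa [← h.limUnder_eq] at h

lemma rhoPlus_le_normSqSlope (x y : E) {t : ℝ} (ht : 0 < t) : rhoPlus x y ≤ normSqSlope x y t := by
  refine le_of_tendsto (tendsto_normSqSlope_rhoPlus x y) ?_
  filter_upwards [Ioo_mem_nhdsGT ht] with s hs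
  exact monotoneOn_normSqSlope x y hs.1.ne' ht.ne' hs.2.le

lemma normSqSlope_le_rhoPlus (x y : E) {t : ℝ} (ht : t < 0) : normSqSlope x y t ≤ rhoPlus x y := by
  refine ge_of_tendsto (tendsto_normSqSlope_rhoPlus x y) ?_
  filter_upwards [self_mem_nhdsWithin] with s (hs : 0 < s)
  exact monotoneOn_normSqSlope x y ht.ne hs.ne' (ht.trans hs).le

lemma rhoMinus_eq_neg_rhoPlus_neg (x y : E) : rhoMinus x y = -rhoPlus x (-y) := by
  have hneg : Tendsto Neg.neg (𝓝[<] (0 : ℝ)) (𝓝[>] 0) := by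
    simpa using tendsto_neg_nhdsLT (a := (0 : ℝ))
  have h : Tendsto (fun t => -normSqSlope x (-y) (-t)) (𝓝[<] 0) (𝓝 (-rhoPlus x (-y))) :=
    ((tendsto_normSqSlope_rhoPlus x (-y)).comp hneg).neg
  simp only [normSqSlope_neg, neg_neg] at h
  exact h.limUnder_eq

lemma rhoMinus_le_rhoPlus (x y : E) : rhoMinus x y ≤ rhoPlus x y := by
  rw [rhoMinus_eq_neg_rhoPlus_neg]
  refine ge_of_tendsto (tendsto_normSqSlope_rhoPlus x y) ?_
  filter_upwards [self_mem_nhdsWithin] with t (ht : 0 < t)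
  have := normSqSlope_le_rhoPlus x (-y) (neg_lt_zero.2 ht)
  rw [normSqSlope_neg, neg_neg] at this
  linarith

lemma normSqSlope_smul_add (x y : E) (α : ℝ) {t : ℝ} (ht : t ≠ 0) (hc : 0 < 1 + t * α) :
    normSqSlope x (α • x + y) t =
      (1 + t * α) * normSqSlope x y (t / (1 + t * α)) + (α + t * α ^ 2 / 2) * ‖x‖ ^ 2 := by
  have hvec : x + t • (α • x + y) = (1 + t * α) • (x + (t / (1 + t * α)) • y) := by
    have hcancel : (1 + t * α) * (t / (1 + t * α)) = t := by field_simp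
    rw [smul_add (1 + t * α), smul_smul, hcancel]
    module
  rw [normSqSlope, normSqSlope, hvec, norm_smul, Real.norm_of_nonneg hc.le]
  field_simp
  ring

lemma rhoPlus_smul_add (x y : E) (α : ℝ) :
    rhoPlus x (α • x + y) = α * ‖x‖ ^ 2 + rhoPlus x y := by
  have hfactor : Tendsto (fun t : ℝ => 1 + t * α) (𝓝[>] 0) (𝓝 1) :=
    ((by fun_prop : Continuous fun t : ℝ => 1 + t * α).tendsto' 0 1 (by simp)).mono_left
      nhdsWithin_le_nhds
  have hpos : ∀ᶠ t in 𝓝[>] (0 : ℝ), 0 < t ∧ 0 < 1 + t * α :=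
    eventually_mem_nhdsWithin.and (hfactor.eventually (lt_mem_nhds one_pos))
  have hrescale : Tendsto (fun t : ℝ => t / (1 + t * α)) (𝓝[>] 0) (𝓝[>] 0) := by
    refine tendsto_nhdsWithin_iff.2 ⟨?_, hpos.mono fun t ht => div_pos ht.1 ht.2⟩
    have hid : Tendsto (fun t : ℝ => t) (𝓝[>] 0) (𝓝 0) :=
      tendsto_nhdsWithin_of_tendsto_nhds tendsto_id
    have h := hid.div hfactor one_ne_zero
    rwa [zero_div] at h
  have hquad : Tendsto (fun t : ℝ => (α + t * α ^ 2 / 2) * ‖x‖ ^ 2) (𝓝[>] 0)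
      (𝓝 (α * ‖x‖ ^ 2)) :=
    ((by fun_prop : Continuous fun t : ℝ => (α + t * α ^ 2 / 2) * ‖x‖ ^ 2).tendsto' 0 _
      (by simp)).mono_left nhdsWithin_le_nhds
  have hlim := (hfactor.mul ((tendsto_normSqSlope_rhoPlus x y).comp hrescale)).add hquad
  rw [one_mul, add_comm] at hlim
  refine tendsto_nhds_unique (tendsto_normSqSlope_rhoPlus x (α • x + y)) (hlim.congr' ?_)
  filter_upwards [hpos] with t ht
  exact (normSqSlope_smul_add x y α ht.1.ne' ht.2).symm

lemma hasDerivWithinAt_norm_add_smul_sq (x y : E) (t : ℝ) :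
    HasDerivWithinAt (fun s : ℝ => ‖x + s • y‖ ^ 2) (2 * rhoPlus (x + t • y) y) (Ici t) t := by
  rw [hasDerivWithinAt_iff_tendsto_slope, Ici_sdiff_left]
  have hshift : Tendsto (fun s => s - t) (𝓝[>] t) (𝓝[>] 0) := by
    have h := (continuous_sub_right t).continuousWithinAt.tendsto_nhdsWithin (x := t)
      (t := Ioi 0) fun s (hs : t < s) => sub_pos.2 hs
    rwa [sub_self] at h
  refine (((tendsto_normSqSlope_rhoPlus (x + t • y) y).comp hshift).const_mul 2).congr fun s => ?_
  have hvec : x + s • y = x + t • y + (s - t) • y := by module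
  rcases eq_or_ne s t with rfl | hst
  · simp [normSqSlope]
  · have hst' : s - t ≠ 0 := sub_ne_zero.2 hst
    rw [slope_def_field, Function.comp_apply, normSqSlope, hvec]
    field_simp

end NormDerivatives

section BirkhoffOrthogonal

variable {E : Type*} [NormedAddCommGroup E] [NormedSpace ℝ E]

def BirkhoffOrthogonal (x y : E) : Prop := ∀ lam : ℝ, ‖x‖ ≤ ‖x + lam • y‖

lemma rhoPlus_nonneg_iff {x y : E} : 0 ≤ rhoPlus x y ↔ ∀ t : ℝ, 0 < t → ‖x‖ ≤ ‖x + t • y‖ := by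
  constructor
  · intro h t ht
    have hslope := two_mul_mul_normSqSlope x y ht.ne'
    have := h.trans (rhoPlus_le_normSqSlope x y ht)
    exact pow_le_pow_iff_left₀ (norm_nonneg _) (norm_nonneg _) two_ne_zero |>.1 (by nlinarith)
  · intro h
    refine ge_of_tendsto (tendsto_normSqSlope_rhoPlus x y) ?_
    filter_upwards [self_mem_nhdsWithin] with t (ht : 0 < t)
    have := pow_le_pow_left₀ (norm_nonneg x) (h t ht) 2
    exact div_nonneg (by linarith) (by positivity)

lemma birkhoffOrthogonal_iff {x y : E} :
    BirkhoffOrthogonal x y ↔ rhoMinus x y ≤ 0 ∧ 0 ≤ rhoPlus x y := by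
  rw [rhoMinus_eq_neg_rhoPlus_neg, neg_nonpos, rhoPlus_nonneg_iff, rhoPlus_nonneg_iff]
  constructor
  · intro h
    exact ⟨fun t _ => by simpa using h (-t), fun t _ => h t⟩
  · rintro ⟨hneg, hpos⟩ lam
    rcases lt_trichotomy lam 0 with hlam | rfl | hlam
    · simpa using hneg (-lam) (neg_pos.2 hlam)
    · simp
    · exact hpos lam hlam

lemma birkhoffOrthogonal_of_rhoStar_eq_zero {x y : E} (h : rhoStar x y = 0) :
    BirkhoffOrthogonal x y := by
  rw [birkhoffOrthogonal_iff]
  rcases mul_eq_zero.1 h with h0 | h0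
  · exact ⟨h0.le, h0 ▸ rhoMinus_le_rhoPlus x y⟩
  · exact ⟨h0 ▸ rhoMinus_le_rhoPlus x y, h0.ge⟩

end BirkhoffOrthogonal

lemma le_of_hasDerivWithinAt_Ici_nonneg {F F' : ℝ → ℝ} {a b : ℝ} (hab : a ≤ b)
    (hF : ContinuousOn F (Icc a b)) (hderiv : ∀ t ∈ Ico a b, HasDerivWithinAt F (F' t) (Ici t) t)
    (hnonneg : ∀ t ∈ Ico a b, 0 ≤ F' t) : F a ≤ F b :=
  image_le_of_deriv_right_le_deriv_boundary continuousOn_const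
    (fun t _ => hasDerivWithinAt_const t _ (F a)) le_rfl hF hderiv hnonneg (right_mem_Icc.2 hab)

section Isometry

variable {X Y : Type*} [NormedAddCommGroup X] [NormedSpace ℝ X]
  [NormedAddCommGroup Y] [NormedSpace ℝ Y] (T : X →ₗ[ℝ] Y)

lemma rhoPlus_map_of_norm_map_eq {c : ℝ} (hT : ∀ x, ‖T x‖ = c * ‖x‖) (x y : X) :
    rhoPlus (T x) (T y) = c ^ 2 * rhoPlus x y := by
  have hslope : normSqSlope (T x) (T y) = fun t => c ^ 2 * normSqSlope x y t := by
    funext t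
    simp only [normSqSlope, ← map_smul, ← map_add, hT]
    ring
  have h := tendsto_normSqSlope_rhoPlus (T x) (T y)
  rw [hslope] at h
  exact tendsto_nhds_unique h ((tendsto_normSqSlope_rhoPlus x y).const_mul _)

lemma rhoStar_map_of_norm_map_eq {c : ℝ} (hT : ∀ x, ‖T x‖ = c * ‖x‖) (x y : X) :
    rhoStar (T x) (T y) = c ^ 4 * rhoStar x y := by
  simp only [rhoStar, rhoMinus_eq_neg_rhoPlus_neg, ← map_neg, rhoPlus_map_of_norm_map_eq T hT]
  ring

end Isometry

section BirkhoffPreserving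

variable {X Y : Type*} [NormedAddCommGroup X] [NormedSpace ℝ X]
  [NormedAddCommGroup Y] [NormedSpace ℝ Y] {T : X →ₗ[ℝ] Y}

lemma rhoPlus_mul_norm_map_sq_le
    (hT : ∀ x y : X, rhoStar x y = 0 → BirkhoffOrthogonal (T x) (T y)) {u : X} (hu : u ≠ 0)
    (v : X) : rhoPlus u v * ‖T u‖ ^ 2 ≤ rhoPlus (T u) (T v) * ‖u‖ ^ 2 := by
  have hu2 : 0 < ‖u‖ ^ 2 := by positivity
  set α := -(rhoPlus u v / ‖u‖ ^ 2) with hα_def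
  have hα : α * ‖u‖ ^ 2 = -rhoPlus u v := by
    rw [hα_def]
    field_simp
  have horth : rhoPlus u (α • u + v) = 0 := by
    rw [rhoPlus_smul_add]
    field_simp
    linarith
  have hB := hT u (α • u + v) (by rw [rhoStar, horth, mul_zero])
  have h := (birkhoffOrthogonal_iff.1 hB).2
  rw [map_add, map_smul, rhoPlus_smul_add] at h
  nlinarith [mul_nonneg h hu2.le]

lemma norm_map_sq_mul_le_of_zero_notMem_segment
    (hT : ∀ x y : X, rhoStar x y = 0 → BirkhoffOrthogonal (T x) (T y)) {a b : X}
    (h : (0 : X) ∉ segment ℝ a b) : ‖T a‖ ^ 2 * ‖b‖ ^ 2 ≤ ‖T b‖ ^ 2 * ‖a‖ ^ 2 := by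
  set v := b - a
  have hp : ∀ t ∈ Icc (0 : ℝ) 1, a + t • v ≠ 0 := fun t ht h0 =>
    h (segment_eq_image' ℝ a b ▸ ⟨t, ht, h0⟩)
  have hpos : ∀ t ∈ Icc (0 : ℝ) 1, 0 < ‖a + t • v‖ ^ 2 := fun t ht => by
    have := norm_pos_iff.2 (hp t ht)
    positivity
  have hcont : ContinuousOn (fun t : ℝ => ‖T a + t • T v‖ ^ 2 / ‖a + t • v‖ ^ 2) (Icc 0 1) :=
    ContinuousOn.div (by fun_prop) (by fun_prop) fun t ht => (hpos t ht).ne'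
  have hmono := le_of_hasDerivWithinAt_Ici_nonneg zero_le_one hcont
    (fun t ht => (hasDerivWithinAt_norm_add_smul_sq (T a) (T v) t).div
      (hasDerivWithinAt_norm_add_smul_sq a v t) (hpos t (Ico_subset_Icc_self ht)).ne')
    fun t ht => ?_
  · have ha := hpos 0 (left_mem_Icc.2 zero_le_one)
    have hb := hpos 1 (right_mem_Icc.2 zero_le_one)
    simp only [zero_smul, add_zero, one_smul, ← map_add, add_sub_cancel, v] at hmono ha hb
    rwa [div_le_div_iff₀ ha hb] at hmono
  · have key := rhoPlus_mul_norm_map_sq_le hT (hp t (Ico_subset_Icc_self ht)) v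
    rw [map_add, map_smul] at key
    exact div_nonneg (by linarith) (by positivity)

lemma norm_map_mul_norm_comm
    (hT : ∀ x y : X, rhoStar x y = 0 → BirkhoffOrthogonal (T x) (T y)) {a b : X}
    (ha : a ≠ 0) (hb : b ≠ 0) : ‖T a‖ * ‖b‖ = ‖T b‖ * ‖a‖ := by
  by_cases hab : (0 : X) ∈ segment ℝ a b
  · obtain ⟨r, -, hr⟩ := (mem_segment_iff_sameRay.1 hab).exists_nonneg_left (by simpa using ha)
    rw [sub_zero, zero_sub] at hr
    subst hr
    simp only [map_smul, norm_smul, map_neg, norm_neg]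
    ring
  · have hba : (0 : X) ∉ segment ℝ b a := segment_symm ℝ a b ▸ hab
    refine (sq_eq_sq₀ (by positivity) (by positivity)).1 ?_
    rw [mul_pow, mul_pow]
    exact le_antisymm (norm_map_sq_mul_le_of_zero_notMem_segment hT hab)
      (norm_map_sq_mul_le_of_zero_notMem_segment hT hba)

end BirkhoffPreserving

lemma norm_map_eq_opNorm_mul {X Y : Type*} [NormedAddCommGroup X] [NormedSpace ℝ X]
    [NormedAddCommGroup Y] [NormedSpace ℝ Y] {T : X →ₗ[ℝ] Y}
    (h : ∀ a b : X, a ≠ 0 → b ≠ 0 → ‖T a‖ * ‖b‖ = ‖T b‖ * ‖a‖) (x : X) :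
    ‖T x‖ = opNorm T * ‖x‖ := by
  rcases eq_or_ne x 0 with rfl | hx
  · simp
  have hx' : ‖x‖ ≠ 0 := norm_ne_zero_iff.2 hx
  have hunit : {c : ℝ | ∃ u : X, ‖u‖ = 1 ∧ c = ‖T u‖} = {‖T x‖ / ‖x‖} := by
    ext c
    simp only [mem_ofPred_eq, mem_singleton_iff]
    constructor
    · rintro ⟨u, hu, rfl⟩
      have hux := h u x (norm_ne_zero_iff.1 (hu ▸ one_ne_zero)) hx
      rw [hu, mul_one] at hux
      rw [eq_div_iff hx', hux]
    · rintro rfl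
      exact ⟨‖x‖⁻¹ • x, by simp [norm_smul, hx'], by simp [norm_smul, div_eq_inv_mul]⟩
  rw [opNorm, hunit, csSup_singleton, div_mul_cancel₀ _ hx']

theorem rhoStar_preserving_tfae_general {X Y : Type*} [NormedAddCommGroup X] [NormedSpace ℝ X]
    [NormedAddCommGroup Y] [NormedSpace ℝ Y]
    (T : X →ₗ[ℝ] Y) :
    List.TFAE
      [ ∀ x y : X, rhoStar x y = 0 → rhoStar (T x) (T y) = 0,
        ∀ x y : X, rhoStar x y = 0 → ∀ lam : ℝ, ‖T x‖ ≤ ‖T x + lam • T y‖,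
        ∀ x : X, ‖T x‖ = opNorm T * ‖x‖,
        ∀ x y : X, rhoStar (T x) (T y) = opNorm T ^ 4 * rhoStar x y ] := by
  tfae_have 1 → 2 := fun h x y hxy => birkhoffOrthogonal_of_rhoStar_eq_zero (h x y hxy)
  tfae_have 2 → 3 := fun h => norm_map_eq_opNorm_mul fun _ _ ha hb => norm_map_mul_norm_comm h ha hb
  tfae_have 3 → 4 := fun h => rhoStar_map_of_norm_map_eq T h
  tfae_have 4 → 1 := fun h x y hxy => by rw [h, hxy, mul_zero]
  tfae_finish

theorem rhoStar_preserving_tfae {X Y : Type*} [NormedAddCommGroup X] [NormedSpace ℝ X]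
    [NormedAddCommGroup Y] [NormedSpace ℝ Y] (hdim : 2 ≤ Module.rank ℝ X)
    (T : X →ₗ[ℝ] Y) (hT : T ≠ 0) :
    List.TFAE
      [ ∀ x y : X, rhoStar x y = 0 → rhoStar (T x) (T y) = 0,
        ∀ x y : X, rhoStar x y = 0 → ∀ lam : ℝ, ‖T x‖ ≤ ‖T x + lam • T y‖,
        ∀ x : X, ‖T x‖ = opNorm T * ‖x‖,
        ∀ x y : X, rhoStar (T x) (T y) = opNorm T ^ 4 * rhoStar x y ] :=
  rhoStar_preserving_tfae_general T
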